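/- arXiv:2011.14428 — 2 statements merged into one kernel-verified Lean document; each statement's English description precedes it below -/
import Mathlib

section
/- Let 𝓗 be a complex Hilbert space, D ⊆ 𝓗 a subspace, and H₁, H₂ : D → 𝓗 linear maps that are symmetric, i.e. ⟪H_j φ, ψ⟫ = ⟪φ, H_j ψ⟫ for all φ, ψ ∈ D and j = 1, 2. Let u₁, u₂ : ℝ → 𝓗 be differentiable functions with u_j(t) ∈ D and u_j'(t) = −i·H_j(u_j(t)) for all t ∈ ℝ. Then for every t ≥ 0, ‖u₁(t) − u₂(t)‖² ≤ ‖u₁(0) − u₂(0)‖² + 2·∫₀ᵗ |⟪u₁(s), (H₁ − H₂)(u₂(s))⟫| ds. -/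
open scoped ComplexInnerProductSpace
open MeasureTheory Filter

section Aux

variable {𝓗 : Type*} [NormedAddCommGroup 𝓗] [InnerProductSpace ℂ 𝓗]

/-- Norm conservation for a solution of a Schrödinger equation with symmetric generator. -/
lemma aux_norm_const (D : Submodule ℂ 𝓗) (H : D →ₗ[ℂ] 𝓗)
    (hH : ∀ φ ψ : D, ⟪H φ, (ψ : 𝓗)⟫ = ⟪(φ : 𝓗), H ψ⟫)
    (v : ℝ → 𝓗) (hv : ∀ s, v s ∈ D)
    (hd : ∀ s, HasDerivAt v ((-Complex.I) • H ⟨v s, hv s⟩) s) (s : ℝ) :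
    ‖v s‖ = ‖v 0‖ := by
  have hPd : ∀ x, HasDerivAt (fun y => (⟪v y, v y⟫ : ℂ)) 0 x := by
    intro x
    have h1 := HasDerivAt.inner ℂ (hd x) (hd x)
    have hsym : (⟪(H ⟨v x, hv x⟩ : 𝓗), v x⟫ : ℂ) = ⟪v x, (H ⟨v x, hv x⟩ : 𝓗)⟫ :=
      hH ⟨v x, hv x⟩ ⟨v x, hv x⟩
    have hval : (⟪v x, (-Complex.I) • H ⟨v x, hv x⟩⟫ : ℂ)
        + ⟪(-Complex.I) • H ⟨v x, hv x⟩, v x⟫ = 0 := by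
      rw [inner_smul_right, inner_smul_left, hsym]
      simp [Complex.conj_I]
    rwa [hval] at h1
  have hconst : (⟪v s, v s⟫ : ℂ) = ⟪v 0, v 0⟫ :=
    is_const_of_deriv_eq_zero (fun x => (hPd x).differentiableAt)
      (fun x => (hPd x).deriv) s 0
  have h3 : ‖v s‖ ^ 2 = ‖v 0‖ ^ 2 := by
    have h := congrArg (RCLike.re (K := ℂ)) hconst
    rwa [inner_self_eq_norm_sq, inner_self_eq_norm_sq] at h
  have := norm_nonneg (v s); have := norm_nonneg (v 0)
  nlinarith [sq_nonneg (‖v s‖ - ‖v 0‖), sq_nonneg (‖v s‖ + ‖v 0‖)]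

/-- The norm of the time derivative of a Schrödinger solution is constant in time. -/
lemma aux_deriv_norm_const (D : Submodule ℂ 𝓗) (H : D →ₗ[ℂ] 𝓗)
    (hH : ∀ φ ψ : D, ⟪H φ, (ψ : 𝓗)⟫ = ⟪(φ : 𝓗), H ψ⟫)
    (u : ℝ → 𝓗) (hu : ∀ s, u s ∈ D)
    (hd : ∀ s, HasDerivAt u ((-Complex.I) • H ⟨u s, hu s⟩) s) (s : ℝ) :
    ‖((-Complex.I) • H ⟨u s, hu s⟩ : 𝓗)‖ = ‖((-Complex.I) • H ⟨u 0, hu 0⟩ : 𝓗)‖ := by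
  have hshift : ∀ h x : ℝ, ‖u (x + h) - u x‖ = ‖u (0 + h) - u 0‖ := by
    intro h
    set v : ℝ → 𝓗 := fun x => u (x + h) - u x with hvdef
    have hv : ∀ x, v x ∈ D := fun x => D.sub_mem (hu _) (hu _)
    have hvd : ∀ x, HasDerivAt v ((-Complex.I) • H ⟨v x, hv x⟩) x := by
      intro x
      have h1 : HasDerivAt (fun y => u (y + h)) ((-Complex.I) • H ⟨u (x + h), hu _⟩) x := by
        have h2 := HasDerivAt.scomp (h := fun y : ℝ => y + h) (x := x)
          (hd (x + h)) ((hasDerivAt_id x).add_const h)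
        simpa [Function.comp_def] using h2
      have h3 := h1.sub (hd x)
      have h4 : (⟨v x, hv x⟩ : D) = ⟨u (x + h), hu _⟩ - ⟨u x, hu x⟩ := by
        apply Subtype.ext; simp [hvdef]
      rw [h4, map_sub, smul_sub]
      exact h3
    exact fun x => aux_norm_const D H hH v hv hvd x
  have T1 := ((hd s).tendsto_slope_zero).norm
  have T2 := ((hd 0).tendsto_slope_zero).norm
  have heq : (fun t : ℝ => ‖t⁻¹ • (u (s + t) - u s)‖)
      = fun t : ℝ => ‖t⁻¹ • (u (0 + t) - u 0)‖ := by
    funext t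
    rw [norm_smul, norm_smul, hshift t s]
  rw [heq] at T1
  exact tendsto_nhds_unique T1 T2

/-- Complex-number computation used below. -/
lemma aux_c (p q : ℂ) :
    ((2 * (-Complex.I * p - Complex.I * q).im : ℝ) : ℂ)
      = -(p + (starRingEnd ℂ) p) - (q + (starRingEnd ℂ) q) := by
  apply Complex.ext <;> simp <;> ring

end Aux

/-- Duhamel-type comparison lemma for two Schrödinger evolutions with (possibly unbounded)
symmetric generators, phrased for differentiable solution curves. -/
theorem schroedinger_duhamel_comparison
    {𝓗 : Type*} [NormedAddCommGroup 𝓗] [InnerProductSpace ℂ 𝓗] [CompleteSpace 𝓗]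
    (D : Submodule ℂ 𝓗) (H₁ H₂ : D →ₗ[ℂ] 𝓗)
    (hH₁ : ∀ φ ψ : D, ⟪H₁ φ, (ψ : 𝓗)⟫ = ⟪(φ : 𝓗), H₁ ψ⟫)
    (hH₂ : ∀ φ ψ : D, ⟪H₂ φ, (ψ : 𝓗)⟫ = ⟪(φ : 𝓗), H₂ ψ⟫)
    (u₁ u₂ : ℝ → 𝓗) (hu₁ : ∀ t, u₁ t ∈ D) (hu₂ : ∀ t, u₂ t ∈ D)
    (hd₁ : ∀ t, HasDerivAt u₁ ((-Complex.I) • H₁ ⟨u₁ t, hu₁ t⟩) t)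
    (hd₂ : ∀ t, HasDerivAt u₂ ((-Complex.I) • H₂ ⟨u₂ t, hu₂ t⟩) t)
    (t : ℝ) (ht : 0 ≤ t) :
    ‖u₁ t - u₂ t‖ ^ 2 ≤ ‖u₁ 0 - u₂ 0‖ ^ 2 +
      2 * ∫ s in (0 : ℝ)..t, ‖⟪u₁ s, (H₁ - H₂) ⟨u₂ s, hu₂ s⟩⟫‖ := by
  classical
  set d₁ : ℝ → 𝓗 := fun s => (-Complex.I) • H₁ ⟨u₁ s, hu₁ s⟩ with hd₁def
  set d₂ : ℝ → 𝓗 := fun s => (-Complex.I) • H₂ ⟨u₂ s, hu₂ s⟩ with hd₂def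
  set z : ℝ → ℂ := fun s => ⟪u₁ s, (H₁ - H₂) ⟨u₂ s, hu₂ s⟩⟫ with hzdef
  -- identity for z via symmetry of H₁
  have e1 : ∀ s, (H₁ ⟨u₁ s, hu₁ s⟩ : 𝓗) = Complex.I • d₁ s := by
    intro s
    rw [hd₁def]
    simp [smul_smul, mul_neg, Complex.I_mul_I]
  have e2 : ∀ s, (H₂ ⟨u₂ s, hu₂ s⟩ : 𝓗) = Complex.I • d₂ s := by
    intro s
    rw [hd₂def]
    simp [smul_smul, mul_neg, Complex.I_mul_I]
  have hzid : ∀ s, z s = -Complex.I * ⟪d₁ s, u₂ s⟫ - Complex.I * ⟪u₁ s, d₂ s⟫ := by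
    intro s
    have h1 : (⟪u₁ s, (H₁ ⟨u₂ s, hu₂ s⟩ : 𝓗)⟫ : ℂ) = ⟪(H₁ ⟨u₁ s, hu₁ s⟩ : 𝓗), u₂ s⟫ :=
      (hH₁ ⟨u₁ s, hu₁ s⟩ ⟨u₂ s, hu₂ s⟩).symm
    rw [hzdef]
    simp only [LinearMap.sub_apply, inner_sub_right, h1, e1 s, e2 s,
      inner_smul_left, inner_smul_right, Complex.conj_I]
  -- measurability of z
  have hderiv1 : deriv u₁ = d₁ := funext fun s => (hd₁ s).deriv
  have hderiv2 : deriv u₂ = d₂ := funext fun s => (hd₂ s).deriv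
  have hm1 : StronglyMeasurable d₁ := hderiv1 ▸ stronglyMeasurable_deriv u₁
  have hm2 : StronglyMeasurable d₂ := hderiv2 ▸ stronglyMeasurable_deriv u₂
  have hc1 : Continuous u₁ := by
    rw [continuous_iff_continuousAt]; exact fun s => (hd₁ s).continuousAt
  have hc2 : Continuous u₂ := by
    rw [continuous_iff_continuousAt]; exact fun s => (hd₂ s).continuousAt
  have hmz : StronglyMeasurable z := by
    have h1 : StronglyMeasurable fun s => (⟪d₁ s, u₂ s⟫ : ℂ) :=
      hm1.inner hc2.stronglyMeasurable
    have h2 : StronglyMeasurable fun s => (⟪u₁ s, d₂ s⟫ : ℂ) :=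
      hc1.stronglyMeasurable.inner hm2
    have : StronglyMeasurable fun s =>
        -Complex.I * ⟪d₁ s, u₂ s⟫ - Complex.I * ⟪u₁ s, d₂ s⟫ :=
      (stronglyMeasurable_const.mul h1).sub (stronglyMeasurable_const.mul h2)
    exact (funext hzid : z = _) ▸ this
  -- uniform bound on ‖z‖
  set C : ℝ := ‖d₁ 0‖ * ‖u₂ 0‖ + ‖u₁ 0‖ * ‖d₂ 0‖ with hCdef
  have hnu1 : ∀ s, ‖u₁ s‖ = ‖u₁ 0‖ := aux_norm_const D H₁ hH₁ u₁ hu₁ hd₁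
  have hnu2 : ∀ s, ‖u₂ s‖ = ‖u₂ 0‖ := aux_norm_const D H₂ hH₂ u₂ hu₂ hd₂
  have hnd1 : ∀ s, ‖d₁ s‖ = ‖d₁ 0‖ := aux_deriv_norm_const D H₁ hH₁ u₁ hu₁ hd₁
  have hnd2 : ∀ s, ‖d₂ s‖ = ‖d₂ 0‖ := aux_deriv_norm_const D H₂ hH₂ u₂ hu₂ hd₂
  have hbound : ∀ s, ‖z s‖ ≤ C := by
    intro s
    rw [hzid s]
    calc ‖-Complex.I * ⟪d₁ s, u₂ s⟫ - Complex.I * ⟪u₁ s, d₂ s⟫‖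
        ≤ ‖-Complex.I * ⟪d₁ s, u₂ s⟫‖ + ‖Complex.I * ⟪u₁ s, d₂ s⟫‖ := norm_sub_le _ _
      _ = ‖(⟪d₁ s, u₂ s⟫ : ℂ)‖ + ‖(⟪u₁ s, d₂ s⟫ : ℂ)‖ := by
          rw [norm_mul, norm_mul]; simp
      _ ≤ ‖d₁ s‖ * ‖u₂ s‖ + ‖u₁ s‖ * ‖d₂ s‖ := by
          gcongr <;> exact norm_inner_le_norm _ _
      _ = C := by rw [hnd1 s, hnu1 s, hnu2 s, hnd2 s]
  -- integrability of 2‖z‖ on [0, t]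
  have hint : IntegrableOn (fun s => 2 * ‖z s‖) (Set.Icc (0 : ℝ) t) := by
    have hconst : IntegrableOn (fun _ : ℝ => 2 * C) (Set.Icc (0 : ℝ) t) :=
      integrableOn_const measure_Icc_lt_top.ne
    refine Integrable.mono' hconst ((hmz.norm.const_mul 2).aestronglyMeasurable.restrict) ?_
    filter_upwards with s
    rw [Real.norm_eq_abs, abs_of_nonneg (by positivity)]
    have := hbound s
    linarith
  -- derivative of ‖u₁ - u₂‖²
  set w : ℝ → 𝓗 := fun s => u₁ s - u₂ s with hwdef
  have hw : ∀ s, HasDerivAt w (d₁ s - d₂ s) s := fun s => (hd₁ s).sub (hd₂ s)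
  have hS : ∀ s, (⟪w s, d₁ s - d₂ s⟫ + ⟪d₁ s - d₂ s, w s⟫ : ℂ)
      = ((2 * (z s).im : ℝ) : ℂ) := by
    intro s
    have R₁ : (⟪u₁ s, d₁ s⟫ : ℂ) + ⟪d₁ s, u₁ s⟫ = 0 := by
      have hsym : (⟪(H₁ ⟨u₁ s, hu₁ s⟩ : 𝓗), u₁ s⟫ : ℂ) = ⟪u₁ s, (H₁ ⟨u₁ s, hu₁ s⟩ : 𝓗)⟫ :=
        hH₁ ⟨u₁ s, hu₁ s⟩ ⟨u₁ s, hu₁ s⟩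
      rw [hd₁def]
      simp only [inner_smul_left, inner_smul_right, hsym, Complex.conj_neg_I, map_neg,
        Complex.conj_I]
      ring
    have R₂ : (⟪u₂ s, d₂ s⟫ : ℂ) + ⟪d₂ s, u₂ s⟫ = 0 := by
      have hsym : (⟪(H₂ ⟨u₂ s, hu₂ s⟩ : 𝓗), u₂ s⟫ : ℂ) = ⟪u₂ s, (H₂ ⟨u₂ s, hu₂ s⟩ : 𝓗)⟫ :=
        hH₂ ⟨u₂ s, hu₂ s⟩ ⟨u₂ s, hu₂ s⟩
      rw [hd₂def]
      simp only [inner_smul_left, inner_smul_right, hsym, Complex.conj_neg_I, map_neg,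
        Complex.conj_I]
      ring
    have c1 : (⟪u₂ s, d₁ s⟫ : ℂ) = (starRingEnd ℂ) ⟪d₁ s, u₂ s⟫ := by
      rw [← inner_conj_symm]
    have c2 : (⟪d₂ s, u₁ s⟫ : ℂ) = (starRingEnd ℂ) ⟪u₁ s, d₂ s⟫ := by
      rw [← inner_conj_symm]
    simp only [hwdef, inner_sub_left, inner_sub_right]
    rw [c1, c2, hzid s, aux_c]
    linear_combination R₁ + R₂
  have hf : ∀ s, HasDerivAt (fun y => ‖w y‖ ^ 2) (2 * (z s).im) s := by
    intro s
    have h0 := HasDerivAt.inner ℂ (hw s) (hw s)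
    rw [hS s] at h0
    have h1 := (Complex.reCLM.hasFDerivAt (x := (⟪w s, w s⟫ : ℂ))).comp_hasDerivAt s h0
    have h2 : (Complex.reCLM ∘ fun y => (⟪w y, w y⟫ : ℂ)) = fun y => ‖w y‖ ^ 2 := by
      funext y
      simp only [Function.comp_apply, Complex.reCLM_apply]
      rw [← RCLike.re_to_complex, inner_self_eq_norm_sq]
    rw [h2] at h1
    simpa using h1
  -- FTC comparison
  have hcont : ContinuousOn (fun y => ‖w y‖ ^ 2) (Set.Icc 0 t) :=
    (continuous_iff_continuousAt.2 fun s => (hf s).continuousAt).continuousOn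
  have main := intervalIntegral.sub_le_integral_of_hasDeriv_right_of_le ht hcont
    (fun x _ => (hf x).hasDerivWithinAt) hint ?_
  · rw [intervalIntegral.integral_const_mul] at main
    have hwt : w t = u₁ t - u₂ t := rfl
    have hw0 : w 0 = u₁ 0 - u₂ 0 := rfl
    simp only [hwt, hw0] at main
    linarith
  · intro x _
    have h1 : (z x).im ≤ ‖z x‖ := by
      refine le_trans (le_abs_self _) ?_
      exact Complex.abs_im_le_norm _
    linarith
end

section
/- Let 𝓗 be a complex Hilbert space and H₁, H₂ : 𝓗 → 𝓗 bounded self-adjoint operators. Then for all Ψ₁, Ψ₂ ∈ 𝓗 and all t ≥ 0, ‖exp(−i t H₁)Ψ₁ − exp(−i t H₂)Ψ₂‖² ≤ ‖Ψ₁ − Ψ₂‖² + 2·∫₀ᵗ |⟪exp(−i s H₁)Ψ₁, (H₁ − H₂) exp(−i s H₂)Ψ₂⟫| ds, where exp denotes the operator exponential of bounded operators. -/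
open scoped ComplexInnerProductSpace
open ComplexConjugate Complex

/-!
With `uₖ(s) = exp(-i s Hₖ) Ψₖ`, the derivative of `‖u₁ - u₂‖²` is
`2 Re ⟪u₁ - u₂, -i (H₁ u₁ - H₂ u₂)⟫ = 2 Im ⟪u₁ - u₂, H₁ u₁ - H₂ u₂⟫`, and self-adjointness kills
every term of this imaginary part except `Im ⟪u₁, (H₁ - H₂) u₂⟫`. Bounding that by its modulus and
integrating from `0` to `t` gives the estimate.
-/

theorem HasDerivAt.norm_sq_complex {E : Type*} [NormedAddCommGroup E]
    [InnerProductSpace ℂ E] {f : ℝ → E} {f' : E} {x : ℝ} (hf : HasDerivAt f f' x) :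
    HasDerivAt (‖f ·‖ ^ 2) (2 * (⟪f x, f'⟫).re) x := by
  let _ := InnerProductSpace.rclikeToReal ℂ E
  simpa [real_inner_eq_re_inner] using hf.norm_sq

theorem hasDerivAt_exp_neg_ofReal_mul_I_smul_apply {E : Type*} [NormedAddCommGroup E]
    [NormedSpace ℂ E] [CompleteSpace E] (H : E →L[ℂ] E) (Ψ : E) (s : ℝ) :
    HasDerivAt (fun s : ℝ => NormedSpace.exp ((-(s : ℂ) * I) • H) Ψ)
      ((-I) • H (NormedSpace.exp ((-(s : ℂ) * I) • H) Ψ)) s := by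
  have hlin : HasDerivAt (fun s : ℝ => -(s : ℂ) * I) (-I) s := by
    simpa using (ofRealCLM.hasDerivAt (x := s)).neg.mul_const I
  have hexp := (hasDerivAt_exp_smul_const' H (-(s : ℂ) * I)).scomp s hlin
  simpa [Function.comp_def] using
    ((ContinuousLinearMap.apply ℂ E Ψ).restrictScalars ℝ).hasFDerivAt.comp_hasDerivAt s hexp

theorem im_inner_sub_apply_sub {E : Type*} [NormedAddCommGroup E] [InnerProductSpace ℂ E]
    {H₁ H₂ : E →L[ℂ] E} (hH₁ : (H₁ : E →ₗ[ℂ] E).IsSymmetric) (hH₂ : (H₂ : E →ₗ[ℂ] E).IsSymmetric)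
    (u₁ u₂ : E) : (⟪u₁ - u₂, H₁ u₁ - H₂ u₂⟫).im = (⟪u₁, (H₁ - H₂) u₂⟫).im := by
  have h₁ : (⟪u₁, H₁ u₁⟫).im = 0 := hH₁.im_inner_self_apply u₁
  have h₂ : (⟪u₂, H₂ u₂⟫).im = 0 := hH₂.im_inner_self_apply u₂
  have h₃ : ⟪u₂, H₁ u₁⟫ = conj ⟪u₁, H₁ u₂⟫ := by
    rw [inner_conj_symm]; exact (hH₁ u₂ u₁).symm
  simp only [inner_sub_left, inner_sub_right, sub_apply, sub_im, h₃, conj_im, h₁, h₂]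
  ring

theorem hasDerivAt_norm_sq_exp_sub_exp {E : Type*} [NormedAddCommGroup E]
    [InnerProductSpace ℂ E] [CompleteSpace E] {H₁ H₂ : E →L[ℂ] E}
    (hH₁ : (H₁ : E →ₗ[ℂ] E).IsSymmetric) (hH₂ : (H₂ : E →ₗ[ℂ] E).IsSymmetric) (Ψ₁ Ψ₂ : E)
    (s : ℝ) :
    HasDerivAt
      (fun s : ℝ => ‖NormedSpace.exp ((-(s : ℂ) * I) • H₁) Ψ₁ -
        NormedSpace.exp ((-(s : ℂ) * I) • H₂) Ψ₂‖ ^ 2)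
      (2 * (⟪NormedSpace.exp ((-(s : ℂ) * I) • H₁) Ψ₁,
        (H₁ - H₂) (NormedSpace.exp ((-(s : ℂ) * I) • H₂) Ψ₂)⟫).im) s := by
  refine ((hasDerivAt_exp_neg_ofReal_mul_I_smul_apply H₁ Ψ₁ s).sub
    (hasDerivAt_exp_neg_ofReal_mul_I_smul_apply H₂ Ψ₂ s)).norm_sq_complex.congr_deriv ?_
  rw [Pi.sub_apply, ← smul_sub, inner_smul_right, mul_re, im_inner_sub_apply_sub hH₁ hH₂]
  simp

/-- Bounded-operator form of the Duhamel comparison lemma for two Schrödinger evolutions. -/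
theorem duhamel_comparison_bounded
    {𝓗 : Type*} [NormedAddCommGroup 𝓗] [InnerProductSpace ℂ 𝓗] [CompleteSpace 𝓗]
    (H₁ H₂ : 𝓗 →L[ℂ] 𝓗) (hH₁ : IsSelfAdjoint H₁) (hH₂ : IsSelfAdjoint H₂)
    (Ψ₁ Ψ₂ : 𝓗) (t : ℝ) (ht : 0 ≤ t) :
    ‖NormedSpace.exp ((-(t : ℂ) * Complex.I) • H₁) Ψ₁ -
        NormedSpace.exp ((-(t : ℂ) * Complex.I) • H₂) Ψ₂‖ ^ 2 ≤
      ‖Ψ₁ - Ψ₂‖ ^ 2 +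
        2 * ∫ s in (0 : ℝ)..t,
          ‖⟪NormedSpace.exp ((-(s : ℂ) * Complex.I) • H₁) Ψ₁,
              (H₁ - H₂) (NormedSpace.exp ((-(s : ℂ) * Complex.I) • H₂) Ψ₂)⟫‖ := by
  have hderiv₁ := hasDerivAt_exp_neg_ofReal_mul_I_smul_apply H₁ Ψ₁
  have hderiv₂ := hasDerivAt_exp_neg_ofReal_mul_I_smul_apply H₂ Ψ₂
  have hcont₁ : Continuous fun s : ℝ => NormedSpace.exp ((-(s : ℂ) * I) • H₁) Ψ₁ :=
    continuous_iff_continuousAt.2 fun s => (hderiv₁ s).continuousAt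
  have hcont₂ : Continuous fun s : ℝ => NormedSpace.exp ((-(s : ℂ) * I) • H₂) Ψ₂ :=
    continuous_iff_continuousAt.2 fun s => (hderiv₂ s).continuousAt
  have hnorm := hasDerivAt_norm_sq_exp_sub_exp hH₁.isSymmetric hH₂.isSymmetric Ψ₁ Ψ₂
  have hftc := intervalIntegral.sub_le_integral_of_hasDeriv_right_of_le ht
    (continuous_iff_continuousAt.2 fun s => (hnorm s).continuousAt).continuousOn
    (fun s _ => (hnorm s).hasDerivWithinAt)
    ((continuous_const.mul (hcont₁.inner ((H₁ - H₂).continuous.comp hcont₂)).norm).integrableOn_Icc)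
    (fun s _ => mul_le_mul_of_nonneg_left ((le_abs_self _).trans (abs_im_le_norm _)) zero_le_two)
  simp only [Pi.mul_apply, intervalIntegral.integral_const_mul, ofReal_zero, neg_zero, zero_mul,
    zero_smul, NormedSpace.exp_zero, one_apply_eq_self] at hftc
  linarith
end
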